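/- Let 1 < p ≤ 2 and let w, w' ∈ ℝ^d satisfy ‖w‖_2 ≤ M and ‖w'‖_2 ≤ M with M = (B/λ)^{1/p}. If ‖w‖_p^p + ‖w'‖_p^p − 2‖(w + w')/2‖_p^p ≤ K·ε for constants K, ε ≥ 0, then ‖w − w'‖_2^2 ≤ (4/(p(p−1))) · M^{2−p} · K·ε. -/

import Mathlib

/-!
On `[-M, M]` with `1 < p ≤ 2`, the function `x ↦ |x| ^ p` is strongly convex with modulus
`p (p - 1) M ^ (p - 2)`: its derivative `p |x| ^ (p - 2) x` grows at rate `p (p - 1) |x| ^ (p - 2)`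
away from `0`, which is at least `p (p - 1) M ^ (p - 2)` because `p - 2 ≤ 0`. The midpoint form
of strong convexity bounds each `(w j - w' j) ^ 2` by the `j`-th term of the `p`-norm gap, which
applies since `|w j| ≤ ‖w‖₂ ≤ M`; summing over `j` gives the claim.
-/

open Real Set Finset

lemma StrongConvexOn.mul_norm_sub_sq_le {E : Type*} [NormedAddCommGroup E] [NormedSpace ℝ E]
    {s : Set E} {m : ℝ} {f : E → ℝ} (hf : StrongConvexOn s m f) {x y : E} (hx : x ∈ s)
    (hy : y ∈ s) :
    m / 4 * ‖x - y‖ ^ 2 ≤ f x + f y - 2 * f (midpoint ℝ x y) := by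
  have h := hf.2 hx hy (by norm_num : (0 : ℝ) ≤ 1 / 2) (by norm_num : (0 : ℝ) ≤ 1 / 2)
    (by norm_num)
  rw [midpoint_eq_smul_add, smul_add, invOf_eq_inv, ← one_div]
  simp only [smul_eq_mul] at h
  linarith

lemma abs_le_sqrt_sum_sq {ι : Type*} [Fintype ι] (v : ι → ℝ) (j : ι) :
    |v j| ≤ √(∑ i, v i ^ 2) :=
  abs_le_sqrt (single_le_sum (fun i _ ↦ sq_nonneg (v i)) (mem_univ j))

section AbsRpow

variable {p M : ℝ}

lemma monotoneOn_rpow_sub_mul (hp1 : 1 < p) (hp2 : p ≤ 2) :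
    MonotoneOn (fun x ↦ p * x ^ (p - 1) - p * (p - 1) * M ^ (p - 2) * x) (Icc 0 M) := by
  refine monotoneOn_of_hasDerivWithinAt_nonneg (convex_Icc 0 M)
    (f' := fun x ↦ p * ((p - 1) * x ^ (p - 2)) - p * (p - 1) * M ^ (p - 2)) ?_ ?_ ?_
  · exact (continuousOn_const.mul (continuousOn_id.rpow_const fun _ _ ↦ Or.inr (by linarith))).sub
      (by fun_prop)
  · intro x hx
    rw [interior_Icc] at hx
    have h := ((hasDerivAt_rpow_const (p := p - 1) (Or.inl hx.1.ne')).const_mul p).sub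
      ((hasDerivAt_id x).const_mul (p * (p - 1) * M ^ (p - 2)))
    rw [show p - 1 - 1 = p - 2 by ring, mul_one] at h
    exact h.hasDerivWithinAt
  · intro x hx
    rw [interior_Icc] at hx
    have hxM : M ^ (p - 2) ≤ x ^ (p - 2) := rpow_le_rpow_of_nonpos hx.1 hx.2.le (by linarith)
    have hp : 0 ≤ p * (p - 1) := by nlinarith
    nlinarith [mul_le_mul_of_nonneg_left hxM hp]

lemma monotoneOn_abs_rpow_mul_sub_mul (hp1 : 1 < p) (hp2 : p ≤ 2) (hM : 0 ≤ M) :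
    MonotoneOn (fun x ↦ p * |x| ^ (p - 2) * x - p * (p - 1) * M ^ (p - 2) * x) (Icc (-M) M) := by
  set h := fun x : ℝ ↦ p * |x| ^ (p - 2) * x - p * (p - 1) * M ^ (p - 2) * x
  have h_odd : ∀ x, h (-x) = -h x := fun x ↦ by simp only [h, abs_neg]; ring
  have h_pos : MonotoneOn h (Icc 0 M) := by
    refine (monotoneOn_rpow_sub_mul hp1 hp2).congr fun x hx ↦ ?_
    rcases hx.1.eq_or_lt with rfl | hx0
    · simp [h, zero_rpow (show p - 1 ≠ 0 by linarith)]
    · simp only [h, abs_of_pos hx0]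
      rw [show p - 1 = p - 2 + 1 by ring, rpow_add_one hx0.ne']
      ring
  have h_neg : MonotoneOn h (Icc (-M) 0) := by
    intro x hx y hy hxy
    have := h_pos ⟨neg_nonneg.2 hy.2, neg_le.1 hy.1⟩ ⟨neg_nonneg.2 hx.2, neg_le.1 hx.1⟩
      (neg_le_neg hxy)
    rw [h_odd, h_odd] at this
    linarith
  rw [← Icc_union_Icc_eq_Icc (neg_nonpos.2 hM) hM]
  exact h_neg.union_right h_pos (isGreatest_Icc (neg_nonpos.2 hM)) (isLeast_Icc hM)

lemma strongConvexOn_abs_rpow (hp1 : 1 < p) (hp2 : p ≤ 2) (hM : 0 ≤ M) :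
    StrongConvexOn (Icc (-M) M) (p * (p - 1) * M ^ (p - 2)) fun x : ℝ ↦ |x| ^ p := by
  rw [strongConvexOn_iff_convex]
  simp only [norm_eq_abs, sq_abs]
  have hderiv : ∀ x : ℝ, HasDerivAt (fun x ↦ |x| ^ p - p * (p - 1) * M ^ (p - 2) / 2 * x ^ 2)
      (p * |x| ^ (p - 2) * x - p * (p - 1) * M ^ (p - 2) * x) x := fun x ↦ by
    refine ((hasDerivAt_abs_rpow x hp1).sub
      ((hasDerivAt_pow 2 x).const_mul (p * (p - 1) * M ^ (p - 2) / 2))).congr_deriv ?_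
    push_cast
    ring
  refine MonotoneOn.convexOn_of_deriv (convex_Icc _ _)
    (fun x _ ↦ (hderiv x).continuousAt.continuousWithinAt)
    (fun x _ ↦ (hderiv x).differentiableAt.differentiableWithinAt) ?_
  rw [funext fun x ↦ (hderiv x).deriv]
  exact (monotoneOn_abs_rpow_mul_sub_mul hp1 hp2 hM).mono interior_subset

end AbsRpow

theorem stmt_18_general (d : ℕ) (p B lam K ε : ℝ) (hp1 : 1 < p) (hp2 : p ≤ 2)
    (hB : 0 < B) (hlam : 0 < lam)
    (w w' : Fin d → ℝ)
    (hw : Real.sqrt (∑ j, (w j) ^ 2) ≤ (B / lam) ^ (1 / p))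
    (hw' : Real.sqrt (∑ j, (w' j) ^ 2) ≤ (B / lam) ^ (1 / p))
    (hgap : ∑ j, |w j| ^ p + ∑ j, |w' j| ^ p - 2 * ∑ j, |(w j + w' j) / 2| ^ p ≤ K * ε) :
    ∑ j, (w j - w' j) ^ 2
      ≤ (4 / (p * (p - 1))) * ((B / lam) ^ (1 / p)) ^ (2 - p) * (K * ε) := by
  set M := (B / lam) ^ (1 / p)
  have hM : 0 < M := rpow_pos_of_pos (div_pos hB hlam) _
  set m := p * (p - 1) * M ^ (p - 2)
  have hm : 0 < m := mul_pos (by nlinarith) (rpow_pos_of_pos hM _)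
  have hcoord (j : Fin d) :
      m / 4 * (w j - w' j) ^ 2 ≤ |w j| ^ p + |w' j| ^ p - 2 * |(w j + w' j) / 2| ^ p := by
    have h := (strongConvexOn_abs_rpow hp1 hp2 hM.le).mul_norm_sub_sq_le
      (abs_le.1 ((abs_le_sqrt_sum_sq w j).trans hw))
      (abs_le.1 ((abs_le_sqrt_sum_sq w' j).trans hw'))
    rwa [norm_eq_abs, sq_abs, midpoint_eq_smul_add, smul_eq_mul, invOf_eq_inv,
      ← div_eq_inv_mul] at h
  have hsum : m / 4 * ∑ j, (w j - w' j) ^ 2 ≤ K * ε := by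
    refine le_trans ?_ hgap
    rw [mul_sum, mul_sum, ← sum_add_distrib, ← sum_sub_distrib]
    exact sum_le_sum fun j _ ↦ hcoord j
  have hconst : 4 / (p * (p - 1)) * M ^ (2 - p) = 1 / (m / 4) := by
    have hp : p - 1 ≠ 0 := by linarith
    rw [show 2 - p = -(p - 2) by ring, rpow_neg hM.le]
    simp only [m]
    field_simp
  rw [hconst, one_div_mul_eq_div, le_div_iff₀' (div_pos hm four_pos)]
  exact hsum

/-- Strong-convexity consequence: for `1 < p ≤ 2`, `‖w‖₂, ‖w'‖₂ ≤ M = (B/λ)^(1/p)`, if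
`‖w‖_p^p + ‖w'‖_p^p − 2‖(w+w')/2‖_p^p ≤ K ε` then
`‖w − w'‖₂² ≤ (4/(p(p−1))) M^(2−p) K ε`. -/
theorem stmt_18 (d : ℕ) (p B lam K ε : ℝ) (hp1 : 1 < p) (hp2 : p ≤ 2)
    (hB : 0 < B) (hlam : 0 < lam) (hK : 0 ≤ K) (hε : 0 ≤ ε)
    (w w' : Fin d → ℝ)
    (hw : Real.sqrt (∑ j, (w j) ^ 2) ≤ (B / lam) ^ (1 / p))
    (hw' : Real.sqrt (∑ j, (w' j) ^ 2) ≤ (B / lam) ^ (1 / p))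
    (hgap : ∑ j, |w j| ^ p + ∑ j, |w' j| ^ p - 2 * ∑ j, |(w j + w' j) / 2| ^ p ≤ K * ε) :
    ∑ j, (w j - w' j) ^ 2
      ≤ (4 / (p * (p - 1))) * ((B / lam) ^ (1 / p)) ^ (2 - p) * (K * ε) :=
  stmt_18_general d p B lam K ε hp1 hp2 hB hlam w w' hw hw' hgap
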